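/- arXiv:2212.05522 — 5 statements merged into one kernel-verified Lean document; each statement's English description precedes it below -/
import Mathlib

section
/- Let 𝓕 be an ω-closed family of nonempty subsets of ω. For elements (i₁,j₁,F₁) and (i₂,j₂,F₂) of the semigroup B_ω^𝓕, one has (i₁,j₁,F₁) ≼ (i₂,j₂,F₂) (i.e., there exists an idempotent e ∈ B_ω^𝓕 with (i₁,j₁,F₁) = (i₂,j₂,F₂)·e) if and only if there exists k ∈ ω such that i₁ = i₂ + k, j₁ = j₂ + k and F₁ ⊆ (−k)+F₂. -/
/-- For `n : ℕ` and `F ⊆ ω`, `wShift n F` is the set `(−n)+F = {x ∈ ω : x + n ∈ F}`. -/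
def wShift (n : ℕ) (F : Set ℕ) : Set ℕ := {x | x + n ∈ F}

/-- A family `𝓕` of subsets of `ω` is ω-closed if `F₁ ∩ ((−n)+F₂) ∈ 𝓕`
for all `n ∈ ω` and `F₁, F₂ ∈ 𝓕`. -/
def OmegaClosed (𝓕 : Set (Set ℕ)) : Prop :=
  ∀ n : ℕ, ∀ F₁ ∈ 𝓕, ∀ F₂ ∈ 𝓕, F₁ ∩ wShift n F₂ ∈ 𝓕

/-- A subset `F ⊆ ω` is inductive if `n ∈ F` implies `n+1 ∈ F`. -/
def InductiveSet (F : Set ℕ) : Prop := ∀ n : ℕ, n ∈ F → n + 1 ∈ F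

/-- The underlying set `ω × ω × 𝓕` of the semigroup `B_ω^𝓕`. -/
abbrev BF (𝓕 : Set (Set ℕ)) : Type := ℕ × ℕ × {F : Set ℕ // F ∈ 𝓕}

/-- The multiplication of the semigroup `B_ω^𝓕`:
`(i₁,j₁,F₁)·(i₂,j₂,F₂) = (i₁−j₁+i₂, j₂, ((j₁−i₂)+F₁) ∩ F₂)` if `j₁ ≤ i₂`, and
`(i₁, j₁−i₂+j₂, F₁ ∩ ((i₂−j₁)+F₂))` if `j₁ ≥ i₂`. -/
def BFmul {𝓕 : Set (Set ℕ)} (h : OmegaClosed 𝓕) (a b : BF 𝓕) : BF 𝓕 :=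
  if a.2.1 ≤ b.1 then
    (a.1 + (b.1 - a.2.1), b.2.1,
      ⟨wShift (b.1 - a.2.1) a.2.2.1 ∩ b.2.2.1, by
        rw [Set.inter_comm]; exact h _ _ b.2.2.2 _ a.2.2.2⟩)
  else
    (a.1, b.2.1 + (a.2.1 - b.1),
      ⟨a.2.2.1 ∩ wShift (a.2.1 - b.1) b.2.2.1, h _ _ a.2.2.2 _ b.2.2.2⟩)

/-! The idempotents of `B_ω^𝓕` are exactly the diagonal triples `(m, m, G)`. Right
multiplication of `(i, j, F)` by `(m, m, G)` gives `(i + (m - j), m, ((-(m - j)) + F) ∩ G)` when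
`j ≤ m` and `(i, j, F ∩ ((-(j - m)) + G))` otherwise, so in both cases a triple
`(i + k, j + k, F')` with `F' ⊆ (-k) + F`; conversely such a triple is `(i, j, F)·(j + k, j + k, F')`. -/

@[simp]
lemma wShift_zero (F : Set ℕ) : wShift 0 F = F := by
  ext x; simp [wShift]

section

variable {𝓕 : Set (Set ℕ)} (hcl : OmegaClosed 𝓕)

lemma BFmul_self_eq_self_iff (e : BF 𝓕) : BFmul hcl e e = e ↔ e.1 = e.2.1 := by
  obtain ⟨m, n, G⟩ := e
  dsimp only
  constructor
  · intro hee
    by_cases h : n ≤ m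
    · have hfst := congrArg Prod.fst hee
      simp only [BFmul, if_pos h] at hfst
      omega
    · have hsnd := congrArg (fun x : BF 𝓕 => x.2.1) hee
      simp only [BFmul, if_neg h] at hsnd
      omega
  · rintro rfl
    simp [BFmul]

lemma exists_shift_of_eq_BFmul_diag {a b : BF 𝓕} {m : ℕ} {G : {F : Set ℕ // F ∈ 𝓕}}
    (hab : a = BFmul hcl b (m, m, G)) :
    ∃ k : ℕ, a.1 = b.1 + k ∧ a.2.1 = b.2.1 + k ∧ a.2.2.1 ⊆ wShift k b.2.2.1 := by
  subst hab
  by_cases h : b.2.1 ≤ m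
  · simp only [BFmul, if_pos h]
    exact ⟨m - b.2.1, rfl, by omega, Set.inter_subset_left⟩
  · simp only [BFmul, if_neg h]
    exact ⟨0, rfl, by omega, by simp⟩

lemma eq_BFmul_diag_of_shift {a b : BF 𝓕} {k : ℕ} (h₁ : a.1 = b.1 + k)
    (h₂ : a.2.1 = b.2.1 + k) (h₃ : a.2.2.1 ⊆ wShift k b.2.2.1) :
    a = BFmul hcl b (b.2.1 + k, b.2.1 + k, a.2.2) := by
  simp only [BFmul, if_pos (Nat.le_add_right b.2.1 k), Nat.add_sub_cancel_left]
  exact Prod.ext h₁ (Prod.ext h₂ (Subtype.ext (Set.inter_eq_right.mpr h₃).symm))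

end

theorem statement0_general (𝓕 : Set (Set ℕ)) (hcl : OmegaClosed 𝓕)
    (a b : BF 𝓕) :
    (∃ e : BF 𝓕, BFmul hcl e e = e ∧ a = BFmul hcl b e) ↔
      ∃ k : ℕ, a.1 = b.1 + k ∧ a.2.1 = b.2.1 + k ∧ a.2.2.1 ⊆ wShift k b.2.2.1 := by
  constructor
  · rintro ⟨⟨m, n, G⟩, hee, hab⟩
    obtain rfl : m = n := (BFmul_self_eq_self_iff hcl _).mp hee
    exact exists_shift_of_eq_BFmul_diag hcl hab
  · rintro ⟨k, h₁, h₂, h₃⟩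
    exact ⟨_, (BFmul_self_eq_self_iff hcl _).mpr rfl, eq_BFmul_diag_of_shift hcl h₁ h₂ h₃⟩

/-- Proposition 2.1: the natural partial order on `B_ω^𝓕`. For a nonempty ω-closed
family `𝓕`, `(i₁,j₁,F₁) ≼ (i₂,j₂,F₂)` (i.e. `a = b·e` for some idempotent `e`)
iff there is `k ∈ ω` with `i₁ = i₂ + k`, `j₁ = j₂ + k` and `F₁ ⊆ (−k)+F₂`. -/
theorem statement0 (𝓕 : Set (Set ℕ)) (hcl : OmegaClosed 𝓕)
    (hne : ∀ F ∈ 𝓕, F.Nonempty) (a b : BF 𝓕) :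
    (∃ e : BF 𝓕, BFmul hcl e e = e ∧ a = BFmul hcl b e) ↔
      ∃ k : ℕ, a.1 = b.1 + k ∧ a.2.1 = b.2.1 + k ∧ a.2.2.1 ⊆ wShift k b.2.2.1 :=
  statement0_general 𝓕 hcl a b
end

section
/- Let 𝓕 be an ω-closed family of nonempty inductive subsets of ω. For every pair of elements a, b of the semigroup B_ω^𝓕, both sets {x ∈ B_ω^𝓕 : a·x = b} and {x ∈ B_ω^𝓕 : x·a = b} are finite. -/
/-!
A nonempty inductive subset of `ω` is a final segment `[m, ∞)`, so an element `(i, j, F)` of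
`B_ω^𝓕` is determined by the triple `(i, j, min F)`. If `a·x = b` (or `x·a = b`), the
multiplication formula bounds the first two coordinates of `x` by those of `a` and `b`, and
puts `min F_b`, shifted by at most `j_a` (resp. `i_a`), into `F_x`; this bounds `min F_x` too.
-/

lemma mem_wShift {n x : ℕ} {F : Set ℕ} : x ∈ wShift n F ↔ x + n ∈ F := Iff.rfl

lemma InductiveSet.eq_Ici_sInf {F : Set ℕ} (hF : F.Nonempty) (hind : InductiveSet F) :
    F = Set.Ici (sInf F) := by
  refine Set.Subset.antisymm (fun n hn => Nat.sInf_le hn) fun n hn => ?_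
  obtain ⟨k, rfl⟩ := Nat.exists_eq_add_of_le hn
  induction k with
  | zero => exact Nat.sInf_mem hF
  | succ k ih => exact hind _ (ih (Nat.le_add_right _ _))

noncomputable def BF.coords {𝓕 : Set (Set ℕ)} (x : BF 𝓕) : ℕ × ℕ × ℕ :=
  (x.1, x.2.1, sInf x.2.2.1)

lemma BF.coords_injective {𝓕 : Set (Set ℕ)} (hne : ∀ F ∈ 𝓕, F.Nonempty)
    (hind : ∀ F ∈ 𝓕, InductiveSet F) : Function.Injective (BF.coords (𝓕 := 𝓕)) := by
  rintro ⟨i, j, F, hF⟩ ⟨i', j', F', hF'⟩ h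
  simp only [BF.coords, Prod.mk.injEq] at h
  obtain ⟨rfl, rfl, hinf⟩ := h
  have : F = F' := by
    rw [(hind F hF).eq_Ici_sInf (hne F hF), (hind F' hF').eq_Ici_sInf (hne F' hF'), hinf]
  subst this
  rfl

lemma BF.finite_setOf_coords_le {𝓕 : Set (Set ℕ)} (hne : ∀ F ∈ 𝓕, F.Nonempty)
    (hind : ∀ F ∈ 𝓕, InductiveSet F) (p : ℕ × ℕ × ℕ) :
    {x : BF 𝓕 | x.coords ≤ p}.Finite :=
  (Set.finite_Iic p).preimage (BF.coords_injective hne hind).injOn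

lemma BFmul_left_coords_le {𝓕 : Set (Set ℕ)} (hcl : OmegaClosed 𝓕) (a x : BF 𝓕)
    (hne : (BFmul hcl a x).2.2.1.Nonempty) :
    x.coords ≤ ((BFmul hcl a x).1 + a.2.1, (BFmul hcl a x).2.1,
      sInf (BFmul hcl a x).2.2.1 + a.2.1) := by
  unfold BFmul at hne ⊢
  split_ifs at hne ⊢ <;> dsimp only [BF.coords] at hne ⊢ <;> rw [Prod.mk_le_mk, Prod.mk_le_mk]
  · have := Nat.sInf_le (Nat.sInf_mem hne).2
    omega
  · have := Nat.sInf_le (mem_wShift.mp (Nat.sInf_mem hne).2)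
    omega

lemma BFmul_right_coords_le {𝓕 : Set (Set ℕ)} (hcl : OmegaClosed 𝓕) (x a : BF 𝓕)
    (hne : (BFmul hcl x a).2.2.1.Nonempty) :
    x.coords ≤ ((BFmul hcl x a).1, (BFmul hcl x a).2.1 + a.1,
      sInf (BFmul hcl x a).2.2.1 + a.1) := by
  unfold BFmul at hne ⊢
  split_ifs at hne ⊢ <;> dsimp only [BF.coords] at hne ⊢ <;> rw [Prod.mk_le_mk, Prod.mk_le_mk]
  · have := Nat.sInf_le (mem_wShift.mp (Nat.sInf_mem hne).1)
    omega
  · have := Nat.sInf_le (Nat.sInf_mem hne).1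
    omega

/-- Proposition 2.2: for an ω-closed family `𝓕` of nonempty inductive subsets of `ω`,
for all `a, b ∈ B_ω^𝓕` the sets `{x : a·x = b}` and `{x : x·a = b}` are finite. -/
theorem statement1 (𝓕 : Set (Set ℕ)) (hcl : OmegaClosed 𝓕)
    (hne : ∀ F ∈ 𝓕, F.Nonempty) (hind : ∀ F ∈ 𝓕, InductiveSet F) (a b : BF 𝓕) :
    {x : BF 𝓕 | BFmul hcl a x = b}.Finite ∧ {x : BF 𝓕 | BFmul hcl x a = b}.Finite := by
  constructor
  · refine (BF.finite_setOf_coords_le hne hind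
      (b.1 + a.2.1, b.2.1, sInf b.2.2.1 + a.2.1)).subset ?_
    rintro x rfl
    exact BFmul_left_coords_le hcl a x (hne _ (BFmul hcl a x).2.2.2)
  · refine (BF.finite_setOf_coords_le hne hind
      (b.1, b.2.1 + a.1, sInf b.2.2.1 + a.1)).subset ?_
    rintro x rfl
    exact BFmul_right_coords_le hcl x a (hne _ (BFmul hcl x a).2.2.2)
end

section
/- Let 𝓕 be an ω-closed family of nonempty inductive subsets of ω with [0) ∈ 𝓕 and [1) ∈ 𝓕. Then in the semigroup B = B_ω^𝓕 the equality ((0,0,[1))·B) ∪ (B·(0,0,[1))) = B \ {(0,0,[0))} holds, where (0,0,[1))·B = {(0,0,[1))·x : x ∈ B} and B·(0,0,[1)) = {x·(0,0,[1)) : x ∈ B}. -/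
/-! Multiplying by `(0,0,G)` on the left or right only intersects the third coordinate:
`(0,0,G)·(i,j,F) = (i,j,((−i)+G) ∩ F)` and `(i,j,F)·(0,0,G) = (i,j,F ∩ ((−j)+G))`.
Since `(−n)+[1) = ω` for `n ≥ 1`, an element with `i ≥ 1` (resp. `j ≥ 1`) is fixed by left
(resp. right) multiplication by `(0,0,[1))`, and so is `(0,0,F)` when `0 ∉ F`; an inductive `F`
containing `0` is `[0)`. Conversely, neither kind of product has `0` in its third coordinate
when `i = 0` (resp. `j = 0`), so neither is `(0,0,[0))`. -/

theorem OmegaClosed.wShift_inter_mem {𝓕 : Set (Set ℕ)} (hcl : OmegaClosed 𝓕) (n : ℕ)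
    {G F : Set ℕ} (hG : G ∈ 𝓕) (hF : F ∈ 𝓕) : wShift n G ∩ F ∈ 𝓕 :=
  Set.inter_comm F _ ▸ hcl n F hF G hG

theorem InductiveSet.eq_Ici_zero {F : Set ℕ} (hF : InductiveSet F) (h0 : 0 ∈ F) :
    F = Set.Ici 0 :=
  Set.eq_of_subset_of_subset (fun _ _ => Nat.zero_le _)
    fun n _ => Nat.rec h0 (fun k hk => hF k hk) n

theorem subset_wShift_Ici_one {n : ℕ} {F : Set ℕ} (h : n ≠ 0 ∨ 0 ∉ F) :
    F ⊆ wShift n (Set.Ici 1) := by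
  intro x hx
  show 1 ≤ x + n
  have : x ≠ 0 ∨ n ≠ 0 := h.symm.imp_left fun h0 hx0 => h0 (hx0 ▸ hx)
  omega

section MulZeroZero

variable {𝓕 : Set (Set ℕ)} (hcl : OmegaClosed 𝓕)

theorem BFmul_zero_zero_left (G F : {F : Set ℕ // F ∈ 𝓕}) (i j : ℕ) :
    BFmul hcl (0, 0, G) (i, j, F) = (i, j, ⟨wShift i G ∩ F, hcl.wShift_inter_mem i G.2 F.2⟩) := by
  simp [BFmul]

theorem BFmul_zero_zero_right (F G : {F : Set ℕ // F ∈ 𝓕}) (i j : ℕ) :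
    BFmul hcl (i, j, F) (0, 0, G) = (i, j, ⟨F ∩ wShift j G, hcl j F F.2 G G.2⟩) := by
  rcases Nat.eq_zero_or_pos j with rfl | hj
  · simp [BFmul, wShift]
  · simp [BFmul, hj.ne']

end MulZeroZero

theorem statement3_general (𝓕 : Set (Set ℕ)) (hcl : OmegaClosed 𝓕)
    (hind : ∀ F ∈ 𝓕, InductiveSet F)
    (h0 : Set.Ici 0 ∈ 𝓕) (h1 : Set.Ici 1 ∈ 𝓕) :
    Set.range (fun x => BFmul hcl (0, 0, ⟨Set.Ici 1, h1⟩) x) ∪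
      Set.range (fun x => BFmul hcl x (0, 0, ⟨Set.Ici 1, h1⟩)) =
      {((0, 0, ⟨Set.Ici 0, h0⟩) : BF 𝓕)}ᶜ := by
  ext ⟨i, j, F, hF⟩
  simp only [Set.mem_union, Set.mem_range, Set.mem_compl_iff, Set.mem_singleton_iff, Prod.exists,
    Subtype.exists, BFmul_zero_zero_left, BFmul_zero_zero_right, Prod.mk.injEq, Subtype.mk.injEq]
  constructor
  · have h0_notMem : 0 ∉ wShift 0 (Set.Ici 1) := by simp [wShift]
    rintro (⟨i, j, G, hG, rfl, rfl, rfl⟩ | ⟨i, j, G, hG, rfl, rfl, rfl⟩) ⟨rfl, rfl, hG0⟩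
    · exact h0_notMem (hG0 ▸ Set.mem_Ici.mpr le_rfl).1
    · exact h0_notMem (hG0 ▸ Set.mem_Ici.mpr le_rfl).2
  · intro hx
    have hcases : i ≠ 0 ∨ j ≠ 0 ∨ 0 ∉ F := by
      by_contra! h
      exact hx ⟨h.1, h.2.1, (hind F hF).eq_Ici_zero h.2.2⟩
    rcases hcases with hi | hj | hF0
    · exact .inl ⟨i, j, F, hF, rfl, rfl, Set.inter_eq_right.mpr (subset_wShift_Ici_one (.inl hi))⟩
    · exact .inr ⟨i, j, F, hF, rfl, rfl, Set.inter_eq_left.mpr (subset_wShift_Ici_one (.inl hj))⟩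
    · exact .inl ⟨i, j, F, hF, rfl, rfl, Set.inter_eq_right.mpr (subset_wShift_Ici_one (.inr hF0))⟩

/-- Equality (2.1): `((0,0,[1))·B) ∪ (B·(0,0,[1))) = B \ {(0,0,[0))}` in `B = B_ω^𝓕`,
where `[k)` denotes `{k, k+1, …} = Set.Ici k`. -/
theorem statement3 (𝓕 : Set (Set ℕ)) (hcl : OmegaClosed 𝓕)
    (hne : ∀ F ∈ 𝓕, F.Nonempty) (hind : ∀ F ∈ 𝓕, InductiveSet F)
    (h0 : Set.Ici 0 ∈ 𝓕) (h1 : Set.Ici 1 ∈ 𝓕) :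
    Set.range (fun x => BFmul hcl (0, 0, ⟨Set.Ici 1, h1⟩) x) ∪
      Set.range (fun x => BFmul hcl x (0, 0, ⟨Set.Ici 1, h1⟩)) =
      {((0, 0, ⟨Set.Ici 0, h0⟩) : BF 𝓕)}ᶜ :=
  statement3_general 𝓕 hcl hind h0 h1
end

section
/- Let 𝓕 be an ω-closed family of nonempty inductive subsets of ω and let S = B_ω^𝓕 ∪ {0} be B_ω^𝓕 with an adjoined zero, equipped with a Hausdorff locally compact shift-continuous topology in which 0 is not an isolated point. If U and V are compact open neighbourhoods of 0 in S, then the set U \ V is finite. -/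
/-- `B_ω^𝓕` with an adjoined zero; `none` plays the role of the zero `0`. -/
abbrev BF0 (𝓕 : Set (Set ℕ)) : Type := Option (BF 𝓕)

/-- The multiplication of the semigroup `B_ω^𝓕` with an adjoined zero. -/
def BF0mul {𝓕 : Set (Set ℕ)} (h : OmegaClosed 𝓕) : BF0 𝓕 → BF0 𝓕 → BF0 𝓕
  | some a, some b => some (BFmul h a b)
  | _, _ => none

/-!
Nonempty inductive subsets of `ω` are final segments `[m, ∞)`, so an element of `B_ω^𝓕` is a
triple `(i, j, m)`. In a Hausdorff shift-continuous topology the set where two given left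
translations differ and two given right translations differ is open. By ω-closedness, either
`𝓕 = {[m, ∞)}`, and comparing translations by `(k, k, [m, ∞))` and `(k + 1, k + 1, [m, ∞))`, or
`𝓕` contains some `[p, ∞)` and `[p + 1, ∞)`, and comparing translations by `(k, k, [p, ∞))` and
`(k, k, [p + 1, ∞))`, gives for suitable `k` such a set that contains a prescribed nonzero point
and is finite. So every nonzero point is isolated, and `U \ V`, which is compact (`U` compact,
`V` open) and avoids `0`, is discrete, hence finite.
-/

lemma wShift_Ici (n s : ℕ) : wShift n (Set.Ici s) = Set.Ici (s - n) := by
  ext x; simp only [wShift, Set.mem_ofPred_eq, Set.mem_Ici]; omega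

lemma eq_Ici_sInf_of_inductive {F : Set ℕ} (hne : F.Nonempty) (hind : InductiveSet F) :
    F = Set.Ici (sInf F) := by
  refine Set.Subset.antisymm (fun x hx => Nat.sInf_le hx) fun x hx => ?_
  induction x, (hx : sInf F ≤ x) using Nat.le_induction with
  | base => exact Nat.sInf_mem hne
  | succ n _ ih => exact hind n ih

lemma forall_eq_Ici_or_exists_Ici_succ_mem {𝓕 : Set (Set ℕ)} (hcl : OmegaClosed 𝓕)
    (hIci : ∀ G ∈ 𝓕, G = Set.Ici (sInf G)) {m : ℕ} (hm : Set.Ici m ∈ 𝓕) :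
    (∀ G ∈ 𝓕, G = Set.Ici m) ∨ ∃ p ≤ m, Set.Ici p ∈ 𝓕 ∧ Set.Ici (p + 1) ∈ 𝓕 := by
  by_contra! h
  obtain ⟨⟨G, hG, hGm⟩, hsucc⟩ := h
  obtain ⟨g, rfl⟩ : ∃ g, G = Set.Ici g := ⟨_, hIci G hG⟩
  rcases Nat.lt_or_gt_of_ne (fun h => hGm (congrArg Set.Ici h)) with hlt | hgt
  · have h := hcl 1 _ hG _ hm
    rw [wShift_Ici, Set.Ici_inter_Ici, show max g (m - 1) = m - 1 by omega] at h
    exact hsucc (m - 1) (Nat.sub_le m 1) h (by rwa [Nat.sub_add_cancel (by omega)])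
  · have h := hcl (g - m - 1) _ hm _ hG
    rw [wShift_Ici, Set.Ici_inter_Ici, show max m (g - (g - m - 1)) = m + 1 by omega] at h
    exact hsucc m le_rfl hm h

lemma finite_setOf_coords_le {𝓕 : Set (Set ℕ)} (hIci : ∀ G ∈ 𝓕, G = Set.Ici (sInf G))
    (N : ℕ) :
    {y : BF 𝓕 | y.1 ≤ N ∧ y.2.1 ≤ N ∧ sInf y.2.2.1 ≤ N}.Finite := by
  have hinj : Function.Injective fun y : BF 𝓕 => (y.1, y.2.1, sInf y.2.2.1) := by
    rintro ⟨i, j, G, hG⟩ ⟨i', j', G', hG'⟩ h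
    simp only [Prod.mk.injEq] at h
    obtain ⟨rfl, rfl, hGG'⟩ := h
    simp only [Prod.mk.injEq, Subtype.mk.injEq, true_and]
    rw [hIci G hG, hIci G' hG', hGG']
  exact ((Set.finite_Iic N).prod ((Set.finite_Iic N).prod (Set.finite_Iic N))).preimage
    hinj.injOn

section Translations

variable {𝓕 : Set (Set ℕ)} (hcl : OmegaClosed 𝓕)

lemma left_mul_eq_iff_of_Ici_succ (hIci : ∀ G ∈ 𝓕, G = Set.Ici (sInf G)) {p : ℕ}
    (hP : Set.Ici p ∈ 𝓕) (hQ : Set.Ici (p + 1) ∈ 𝓕) (k : ℕ) (y : BF 𝓕) :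
    BFmul hcl (k, k, ⟨_, hP⟩) y = BFmul hcl (k, k, ⟨_, hQ⟩) y ↔ p + k < sInf y.2.2.1 + y.1 := by
  obtain ⟨i, j, G, hG⟩ := y
  obtain ⟨g, rfl⟩ : ∃ g, G = Set.Ici g := ⟨_, hIci G hG⟩
  simp only [BFmul, wShift_Ici, Set.Ici_inter_Ici, csInf_Ici]
  split_ifs <;> simp only [Prod.mk.injEq, Subtype.mk.injEq, Set.Ici_inj, true_and] <;>
    omega

lemma right_mul_eq_iff_of_Ici_succ (hIci : ∀ G ∈ 𝓕, G = Set.Ici (sInf G)) {p : ℕ}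
    (hP : Set.Ici p ∈ 𝓕) (hQ : Set.Ici (p + 1) ∈ 𝓕) (k : ℕ) (y : BF 𝓕) :
    BFmul hcl y (k, k, ⟨_, hP⟩) = BFmul hcl y (k, k, ⟨_, hQ⟩) ↔ p + k < sInf y.2.2.1 + y.2.1 := by
  obtain ⟨i, j, G, hG⟩ := y
  obtain ⟨g, rfl⟩ : ∃ g, G = Set.Ici g := ⟨_, hIci G hG⟩
  simp only [BFmul, wShift_Ici, Set.Ici_inter_Ici, csInf_Ici]
  split_ifs <;> simp only [Prod.mk.injEq, Subtype.mk.injEq, Set.Ici_inj, true_and] <;>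
    omega

lemma left_mul_eq_iff_of_succ_index (hIci : ∀ G ∈ 𝓕, G = Set.Ici (sInf G)) {p : ℕ}
    (hP : Set.Ici p ∈ 𝓕) (k : ℕ) (y : BF 𝓕) :
    BFmul hcl (k, k, ⟨_, hP⟩) y = BFmul hcl (k + 1, k + 1, ⟨_, hP⟩) y ↔
      k < y.1 ∧ p + k < sInf y.2.2.1 + y.1 := by
  obtain ⟨i, j, G, hG⟩ := y
  obtain ⟨g, rfl⟩ : ∃ g, G = Set.Ici g := ⟨_, hIci G hG⟩
  simp only [BFmul, wShift_Ici, Set.Ici_inter_Ici, csInf_Ici]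
  split_ifs <;> simp only [Prod.mk.injEq, Subtype.mk.injEq, Set.Ici_inj, true_and] <;>
    omega

lemma right_mul_eq_iff_of_succ_index (hIci : ∀ G ∈ 𝓕, G = Set.Ici (sInf G)) {p : ℕ}
    (hP : Set.Ici p ∈ 𝓕) (k : ℕ) (y : BF 𝓕) :
    BFmul hcl y (k, k, ⟨_, hP⟩) = BFmul hcl y (k + 1, k + 1, ⟨_, hP⟩) ↔
      k < y.2.1 ∧ p + k < sInf y.2.2.1 + y.2.1 := by
  obtain ⟨i, j, G, hG⟩ := y
  obtain ⟨g, rfl⟩ : ∃ g, G = Set.Ici g := ⟨_, hIci G hG⟩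
  simp only [BFmul, wShift_Ici, Set.Ici_inter_Ici, csInf_Ici]
  split_ifs <;> simp only [Prod.mk.injEq, Subtype.mk.injEq, Set.Ici_inj, true_and] <;>
    omega

variable [TopologicalSpace (BF0 𝓕)] [T2Space (BF0 𝓕)]

lemma isOpen_singleton_some_of_finite_disagreement
    (hleft : ∀ a, Continuous (BF0mul hcl a ·)) (hright : ∀ a, Continuous (BF0mul hcl · a))
    {e e' f f' a : BF 𝓕} (ha : BFmul hcl e a ≠ BFmul hcl e' a ∧ BFmul hcl a f ≠ BFmul hcl a f')
    (hfin : {y | BFmul hcl e y ≠ BFmul hcl e' y ∧ BFmul hcl y f ≠ BFmul hcl y f'}.Finite) :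
    IsOpen {some a} := by
  set W := {x | BF0mul hcl (some e) x ≠ BF0mul hcl (some e') x} ∩
    {x | BF0mul hcl x (some f) ≠ BF0mul hcl x (some f')}
  have hWo : IsOpen W :=
    (isOpen_ne_fun (hleft _) (hleft _)).inter (isOpen_ne_fun (hright _) (hright _))
  have hW :
      W ⊆ some '' {y | BFmul hcl e y ≠ BFmul hcl e' y ∧ BFmul hcl y f ≠ BFmul hcl y f'} := by
    rintro (_ | y) ⟨hy, hy'⟩
    · exact absurd rfl hy
    · exact ⟨y, ⟨fun h => hy (congrArg some h), fun h => hy' (congrArg some h)⟩, rfl⟩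
  refine isOpen_singleton_of_finite_mem_nhds _ (hWo.mem_nhds ?_) ((hfin.image some).subset hW)
  exact ⟨fun h => ha.1 (Option.some.inj h), fun h => ha.2 (Option.some.inj h)⟩

theorem isOpen_singleton_some (hIci : ∀ G ∈ 𝓕, G = Set.Ici (sInf G))
    (hleft : ∀ a, Continuous (BF0mul hcl a ·)) (hright : ∀ a, Continuous (BF0mul hcl · a))
    (a : BF 𝓕) : IsOpen {some a} := by
  obtain ⟨i, j, F, hF⟩ := a
  obtain ⟨m, rfl⟩ : ∃ m, F = Set.Ici m := ⟨_, hIci F hF⟩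
  rcases forall_eq_Ici_or_exists_Ici_succ_mem hcl hIci hF with hsingle | ⟨p, hpm, hP, hQ⟩
  · refine isOpen_singleton_some_of_finite_disagreement hcl hleft hright
      (e := (i, i, ⟨_, hF⟩)) (e' := (i + 1, i + 1, ⟨_, hF⟩))
      (f := (j, j, ⟨_, hF⟩)) (f' := (j + 1, j + 1, ⟨_, hF⟩)) ?_ ?_
    · simp [left_mul_eq_iff_of_succ_index hcl hIci, right_mul_eq_iff_of_succ_index hcl hIci]
    · refine (finite_setOf_coords_le hIci (m + i + j)).subset fun y hy => ?_
      simp only [Set.mem_ofPred_eq, ne_eq, left_mul_eq_iff_of_succ_index hcl hIci,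
        right_mul_eq_iff_of_succ_index hcl hIci, hsingle _ y.2.2.2, csInf_Ici] at hy ⊢
      omega
  · -- `p ≤ m`, so the set is `{y | sInf y.2.2.1 + y.1 ≤ m + i ∧ sInf y.2.2.1 + y.2.1 ≤ m + j}`
    refine isOpen_singleton_some_of_finite_disagreement hcl hleft hright
      (e := (m + i - p, m + i - p, ⟨_, hP⟩)) (e' := (m + i - p, m + i - p, ⟨_, hQ⟩))
      (f := (m + j - p, m + j - p, ⟨_, hP⟩)) (f' := (m + j - p, m + j - p, ⟨_, hQ⟩)) ?_ ?_
    · simp only [ne_eq, left_mul_eq_iff_of_Ici_succ hcl hIci,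
        right_mul_eq_iff_of_Ici_succ hcl hIci, csInf_Ici]
      omega
    · refine (finite_setOf_coords_le hIci (m + i + j)).subset fun y hy => ?_
      simp only [Set.mem_ofPred_eq, ne_eq, left_mul_eq_iff_of_Ici_succ hcl hIci,
        right_mul_eq_iff_of_Ici_succ hcl hIci] at hy ⊢
      omega

end Translations

theorem statement5_general (𝓕 : Set (Set ℕ)) (hcl : OmegaClosed 𝓕)
    (hne : ∀ F ∈ 𝓕, F.Nonempty) (hind : ∀ F ∈ 𝓕, InductiveSet F)
    (τ : TopologicalSpace (BF0 𝓕)) (hT2 : @T2Space _ τ)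
    (hsc : ∀ a : BF0 𝓕, @Continuous _ _ τ τ (fun x => BF0mul hcl a x) ∧
        @Continuous _ _ τ τ (fun x => BF0mul hcl x a))
    (U V : Set (BF0 𝓕))
    (hUc : @IsCompact _ τ U)
    (hVo : @IsOpen _ τ V) (hV0 : none ∈ V) :
    (U \ V).Finite := by
  have hIci : ∀ F ∈ 𝓕, F = Set.Ici (sInf F) := fun F hF =>
    eq_Ici_sInf_of_inductive (hne F hF) (hind F hF)
  have hisolated : ∀ x ∈ U \ V, IsOpen {x} := by
    rintro (_ | a) hx
    · exact absurd hV0 hx.2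
    · exact isOpen_singleton_some hcl hIci (fun a => (hsc a).1) (fun a => (hsc a).2) a
  refine (hUc.diff hVo).finite (isDiscrete_iff_forall_mem_exists_isOpen.2 fun x hx => ?_)
  exact ⟨{x}, hisolated x hx, Set.singleton_inter_of_mem hx⟩

/-- Lemma 3.1: if `S = B_ω^𝓕 ∪ {0}` carries a Hausdorff locally compact
shift-continuous topology with nonisolated zero, then for any two compact open
neighbourhoods `U`, `V` of the zero, the set `U \ V` is finite. -/
theorem statement5 (𝓕 : Set (Set ℕ)) (hcl : OmegaClosed 𝓕)
    (hne : ∀ F ∈ 𝓕, F.Nonempty) (hind : ∀ F ∈ 𝓕, InductiveSet F)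
    (τ : TopologicalSpace (BF0 𝓕)) (hT2 : @T2Space _ τ)
    (hlc : @LocallyCompactSpace _ τ)
    (hsc : ∀ a : BF0 𝓕, @Continuous _ _ τ τ (fun x => BF0mul hcl a x) ∧
        @Continuous _ _ τ τ (fun x => BF0mul hcl x a))
    (hni : ¬ @IsOpen _ τ {(none : BF0 𝓕)})
    (U V : Set (BF0 𝓕))
    (hUc : @IsCompact _ τ U) (hUo : @IsOpen _ τ U) (hU0 : none ∈ U)
    (hVc : @IsCompact _ τ V) (hVo : @IsOpen _ τ V) (hV0 : none ∈ V) :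
    (U \ V).Finite :=
  statement5_general 𝓕 hcl hne hind τ hT2 hsc U V hUc hVo hV0
end

section
/- Let 𝓕 be an ω-closed family of nonempty inductive subsets of ω and let S = B_ω^𝓕 ∪ {0} be B_ω^𝓕 with an adjoined zero, equipped with a Hausdorff locally compact shift-continuous topology in which 0 is not an isolated point. Then for every neighbourhood U of 0 in S there exists F ∈ 𝓕 such that the set B_ω^{F} \ U is finite. -/
/-!
Since the members of `𝓕` are nonempty and inductive, each is a ray `[m, ∞)`, so the nonzero
elements of `S` are coordinate triples `(i, j, m)`. For a nonzero `x`, the set where two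
well-chosen translations differ is open, and three such sets cut out a finite neighbourhood of `x`;
so every nonzero point is isolated. Hence a compact neighbourhood `K ⊆ U` of `0` is moved out of
itself by a continuous map fixing `0` at only finitely many points. The four unit shifts of `i` and
`j` are translations by elements of least level, so the infinite set of coordinates of `K` is
invariant under them up to finitely many points, and such a set contains, for one level `m`, every
`(i, j, m)` with `i + j` large.
-/

theorem iff_base_of_le_add {P : ℕ → ℕ → Prop} {N : ℕ}
    (h₁ : ∀ a b, N ≤ a + b → (P (a + 1) b ↔ P a b))
    (h₂ : ∀ a b, N ≤ a + b → (P a (b + 1) ↔ P a b)) {a b : ℕ} (hab : N ≤ a + b) :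
    P a b ↔ P N 0 := by
  have hfst : ∀ a b k, N ≤ a + b → (P (a + k) b ↔ P a b) := by
    intro a b k hab
    induction k with
    | zero => rfl
    | succ k ih => exact (h₁ (a + k) b (by omega)).trans ih
  have hsnd : ∀ a b k, N ≤ a + b → (P a (b + k) ↔ P a b) := by
    intro a b k hab
    induction k with
    | zero => rfl
    | succ k ih => exact (h₂ a (b + k) (by omega)).trans ih
  calc P a b ↔ P (a + N) b := (hfst a b N hab).symm
    _ ↔ P (a + N) 0 := by simpa using hsnd (a + N) 0 b (by omega)
    _ ↔ P N 0 := by rw [add_comm]; exact hfst N 0 a (by omega)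

lemma mem_preimage_iff_of_notMem_symmDiff {α : Type*} {A : Set α} {σ : α → α} {t : α}
    (h : t ∉ symmDiff A (σ ⁻¹' A)) : σ t ∈ A ↔ t ∈ A := by
  rw [Set.mem_symmDiff] at h
  tauto

theorem exists_forall_le_add_mem {A : Set (ℕ × ℕ × ℕ)} (hA : A.Infinite)
    (h₁ : (symmDiff A ((fun t => (t.1 + 1, t.2.1, t.2.2)) ⁻¹' A)).Finite)
    (h₂ : (symmDiff A ((fun t => (t.1, t.2.1 + 1, t.2.2)) ⁻¹' A)).Finite) :
    ∃ m N, ∀ a b, N ≤ a + b → (a, b, m) ∈ A := by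
  obtain ⟨N, hN⟩ := ((h₁.union h₂).image fun t => t.1 + t.2.1 + t.2.2).bddAbove
  have hfar : ∀ a b m, N < a + b + m → (a, b, m) ∉ symmDiff A _ ∪ symmDiff A _ :=
    fun a b m h hmem => (hN ⟨_, hmem, rfl⟩).not_gt h
  have hnear : {t : ℕ × ℕ × ℕ | t.1 + t.2.1 + t.2.2 ≤ N}.Finite :=
    ((Set.finite_Iic N).prod ((Set.finite_Iic N).prod (Set.finite_Iic N))).subset
      fun t ht => ⟨by simp at ht ⊢; omega, by simp at ht ⊢; omega, by simp at ht ⊢; omega⟩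
  -- a point of `A` beyond all exceptional points fixes the level `m`
  obtain ⟨⟨a₀, b₀, m⟩, ht₀, hfar₀⟩ := hA.exists_notMem_finite hnear
  simp only [Set.mem_ofPred_eq, not_le] at hfar₀
  have key : ∀ {a b}, N + 1 - m ≤ a + b → ((a, b, m) ∈ A ↔ (N + 1 - m, 0, m) ∈ A) :=
    iff_base_of_le_add (P := fun a b => (a, b, m) ∈ A)
      (fun a b h => mem_preimage_iff_of_notMem_symmDiff fun hmem =>
        hfar a b m (by omega) (Or.inl hmem))
      (fun a b h => mem_preimage_iff_of_notMem_symmDiff fun hmem =>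
        hfar a b m (by omega) (Or.inr hmem))
  exact ⟨m, N + 1 - m, fun a b hab => (key hab).2 ((key (by omega)).1 ht₀)⟩

namespace BF0

variable {𝓕 : Set (Set ℕ)}

lemma wShift_Ici (n m : ℕ) : wShift n (Set.Ici m) = Set.Ici (m - n) := by
  ext x
  show m ≤ x + n ↔ m - n ≤ x
  omega

lemma eq_Ici_sInf_of_inductiveSet {F : Set ℕ} (hF : F.Nonempty) (hind : InductiveSet F) :
    F = Set.Ici (sInf F) := by
  refine Set.Subset.antisymm (fun x hx => Nat.sInf_le hx) fun x hx => ?_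
  induction x, Set.mem_Ici.mp hx using Nat.le_induction with
  | base => exact Nat.sInf_mem hF
  | succ n hn ih => exact hind n (ih hn)

lemma Ici_mem_of_le_of_le (hcl : OmegaClosed 𝓕) {g k m : ℕ} (hg : Set.Ici g ∈ 𝓕)
    (hm : Set.Ici m ∈ 𝓕) (hgk : g ≤ k) (hkm : k ≤ m) : Set.Ici k ∈ 𝓕 := by
  have := hcl (m - k) _ hg _ hm
  rwa [wShift_Ici, Nat.sub_sub_self hkm, Set.Ici_inter_Ici, max_eq_right hgk] at this

/-- The element `(i, j, [m, ∞))` of `B_ω^𝓕`, and the zero when `[m, ∞) ∉ 𝓕`. -/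
noncomputable def el (𝓕 : Set (Set ℕ)) (t : ℕ × ℕ × ℕ) : BF0 𝓕 :=
  open Classical in
  if h : Set.Ici t.2.2 ∈ 𝓕 then some (t.1, t.2.1, ⟨Set.Ici t.2.2, h⟩) else none

lemma el_of_mem {t : ℕ × ℕ × ℕ} (h : Set.Ici t.2.2 ∈ 𝓕) :
    el 𝓕 t = some (t.1, t.2.1, ⟨Set.Ici t.2.2, h⟩) :=
  dif_pos h

lemma el_injOn : Set.InjOn (el 𝓕) {t | Set.Ici t.2.2 ∈ 𝓕} := by
  intro t (ht : Set.Ici t.2.2 ∈ 𝓕) t' (ht' : Set.Ici t'.2.2 ∈ 𝓕) h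
  rw [el_of_mem ht, el_of_mem ht'] at h
  simp only [Option.some.injEq, Prod.mk.injEq, Subtype.mk.injEq, Set.Ici_inj] at h
  exact Prod.ext h.1 (Prod.ext h.2.1 h.2.2)

lemma el_ne_el {t t' : ℕ × ℕ × ℕ} (ht : Set.Ici t.2.2 ∈ 𝓕) (hne : t ≠ t') : el 𝓕 t ≠ el 𝓕 t' := by
  intro h
  by_cases ht' : Set.Ici t'.2.2 ∈ 𝓕
  · exact hne (el_injOn ht ht' h)
  · rw [el_of_mem ht, el, dif_neg ht'] at h
    exact Option.some_ne_none _ h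

lemma exists_eq_el (hne : ∀ F ∈ 𝓕, F.Nonempty) (hind : ∀ F ∈ 𝓕, InductiveSet F)
    {y : BF0 𝓕} (hy : y ≠ none) : ∃ t, Set.Ici t.2.2 ∈ 𝓕 ∧ y = el 𝓕 t := by
  obtain ⟨⟨i, j, F, hF⟩, rfl⟩ := Option.ne_none_iff_exists'.mp hy
  have hFeq := eq_Ici_sInf_of_inductiveSet (hne F hF) (hind F hF)
  refine ⟨(i, j, sInf F), hFeq ▸ hF, ?_⟩
  rw [el_of_mem (hFeq ▸ hF)]
  congr

lemma mul_none (hcl : OmegaClosed 𝓕) (y : BF0 𝓕) : BF0mul hcl y none = none := by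
  cases y <;> rfl

lemma none_mul (hcl : OmegaClosed 𝓕) (y : BF0 𝓕) : BF0mul hcl none y = none := by
  cases y <;> rfl

lemma el_mul_el_of_le (hcl : OmegaClosed 𝓕) {i₁ j₁ m₁ i₂ j₂ m₂ : ℕ}
    (h₁ : Set.Ici m₁ ∈ 𝓕) (h₂ : Set.Ici m₂ ∈ 𝓕) (h : j₁ ≤ i₂) :
    BF0mul hcl (el 𝓕 (i₁, j₁, m₁)) (el 𝓕 (i₂, j₂, m₂)) =
      el 𝓕 (i₁ + (i₂ - j₁), j₂, max (m₁ - (i₂ - j₁)) m₂) := by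
  have hset : wShift (i₂ - j₁) (Set.Ici m₁) ∩ Set.Ici m₂ = Set.Ici (max (m₁ - (i₂ - j₁)) m₂) := by
    rw [wShift_Ici, Set.Ici_inter_Ici]
  have hmem : Set.Ici (max (m₁ - (i₂ - j₁)) m₂) ∈ 𝓕 := by
    rw [← hset, Set.inter_comm]; exact hcl _ _ h₂ _ h₁
  rw [el_of_mem h₁, el_of_mem h₂, el_of_mem hmem]
  simp only [BF0mul, BFmul, if_pos h, hset]

lemma el_mul_el_of_ge (hcl : OmegaClosed 𝓕) {i₁ j₁ m₁ i₂ j₂ m₂ : ℕ}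
    (h₁ : Set.Ici m₁ ∈ 𝓕) (h₂ : Set.Ici m₂ ∈ 𝓕) (h : i₂ ≤ j₁) :
    BF0mul hcl (el 𝓕 (i₁, j₁, m₁)) (el 𝓕 (i₂, j₂, m₂)) =
      el 𝓕 (i₁, j₂ + (j₁ - i₂), max m₁ (m₂ - (j₁ - i₂))) := by
  rcases h.eq_or_lt with rfl | hlt
  · simp [el_mul_el_of_le hcl h₁ h₂ le_rfl]
  have hset : Set.Ici m₁ ∩ wShift (j₁ - i₂) (Set.Ici m₂) = Set.Ici (max m₁ (m₂ - (j₁ - i₂))) := by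
    rw [wShift_Ici, Set.Ici_inter_Ici]
  have hmem : Set.Ici (max m₁ (m₂ - (j₁ - i₂))) ∈ 𝓕 := hset ▸ hcl _ _ h₁ _ h₂
  rw [el_of_mem h₁, el_of_mem h₂, el_of_mem hmem]
  simp only [BF0mul, BFmul, if_neg (not_le.mpr hlt), hset]

noncomputable def minLevel (𝓕 : Set (Set ℕ)) : ℕ := sInf {m | Set.Ici m ∈ 𝓕}

lemma Ici_minLevel_mem {m : ℕ} (hm : Set.Ici m ∈ 𝓕) : Set.Ici (minLevel 𝓕) ∈ 𝓕 :=
  Nat.sInf_mem (s := {m | Set.Ici m ∈ 𝓕}) ⟨m, hm⟩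

lemma minLevel_le {m : ℕ} (hm : Set.Ici m ∈ 𝓕) : minLevel 𝓕 ≤ m :=
  Nat.sInf_le hm

lemma el_minLevel_mul (hcl : OmegaClosed 𝓕) {a b r s m : ℕ} (hm : Set.Ici m ∈ 𝓕) (h : b ≤ r) :
    BF0mul hcl (el 𝓕 (a, b, minLevel 𝓕)) (el 𝓕 (r, s, m)) = el 𝓕 (a + (r - b), s, m) := by
  rw [el_mul_el_of_le hcl (Ici_minLevel_mem hm) hm h,
    max_eq_right ((Nat.sub_le _ _).trans (minLevel_le hm))]

lemma el_mul_el_minLevel (hcl : OmegaClosed 𝓕) {a b r s m : ℕ} (hm : Set.Ici m ∈ 𝓕) (h : a ≤ s) :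
    BF0mul hcl (el 𝓕 (r, s, m)) (el 𝓕 (a, b, minLevel 𝓕)) = el 𝓕 (r, b + (s - a), m) := by
  rw [el_mul_el_of_ge hcl hm (Ici_minLevel_mem hm) h,
    max_eq_left ((Nat.sub_le _ _).trans (minLevel_le hm))]

section Isolation

variable [TopologicalSpace (BF0 𝓕)] [T2Space (BF0 𝓕)] (hcl : OmegaClosed 𝓕)

lemma exists_isOpen_fst_le (hleft : ∀ a, Continuous (BF0mul hcl a)) {p q g : ℕ}
    (hg : Set.Ici g ∈ 𝓕) :
    ∃ O : Set (BF0 𝓕), IsOpen O ∧ el 𝓕 (p, q, g) ∈ O ∧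
      ∀ t, Set.Ici t.2.2 ∈ 𝓕 → el 𝓕 t ∈ O → t.1 ≤ p := by
  refine ⟨{y | BF0mul hcl (el 𝓕 (0, p, minLevel 𝓕)) y ≠ BF0mul hcl (el 𝓕 (1, p + 1, minLevel 𝓕)) y},
    isOpen_ne_fun (hleft _) (hleft _), ?_, ?_⟩
  · show BF0mul hcl _ _ ≠ _
    rw [el_minLevel_mul hcl hg le_rfl,
      el_mul_el_of_ge hcl (Ici_minLevel_mem hg) hg (Nat.le_succ p)]
    exact el_ne_el hg (by simp)
  · rintro ⟨r, s, m⟩ (hm : Set.Ici m ∈ 𝓕) hne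
    show r ≤ p
    by_contra! hpr
    apply hne
    rw [el_minLevel_mul hcl hm hpr.le, el_minLevel_mul hcl hm hpr,
      show 0 + (r - p) = 1 + (r - (p + 1)) by omega]

lemma exists_isOpen_snd_le (hright : ∀ a, Continuous (BF0mul hcl · a)) {p q g : ℕ}
    (hg : Set.Ici g ∈ 𝓕) :
    ∃ O : Set (BF0 𝓕), IsOpen O ∧ el 𝓕 (p, q, g) ∈ O ∧
      ∀ t, Set.Ici t.2.2 ∈ 𝓕 → el 𝓕 t ∈ O → t.2.1 ≤ q := by
  refine ⟨{y | BF0mul hcl y (el 𝓕 (q, 0, minLevel 𝓕)) ≠ BF0mul hcl y (el 𝓕 (q + 1, 1, minLevel 𝓕))},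
    isOpen_ne_fun (hright _) (hright _), ?_, ?_⟩
  · show BF0mul hcl _ _ ≠ _
    rw [el_mul_el_minLevel hcl hg le_rfl,
      el_mul_el_of_le hcl hg (Ici_minLevel_mem hg) (Nat.le_succ q)]
    exact el_ne_el hg (by simp)
  · rintro ⟨r, s, m⟩ (hm : Set.Ici m ∈ 𝓕) hne
    show s ≤ q
    by_contra! hqs
    apply hne
    rw [el_mul_el_minLevel hcl hm hqs.le, el_mul_el_minLevel hcl hm hqs,
      show 0 + (s - q) = 1 + (s - (q + 1)) by omega]

lemma exists_isOpen_level_lt (hleft : ∀ a, Continuous (BF0mul hcl a)) {p q g : ℕ}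
    (hg : Set.Ici g ∈ 𝓕) :
    ∃ O : Set (BF0 𝓕), IsOpen O ∧ el 𝓕 (p, q, g) ∈ O ∧
      ∀ t, Set.Ici t.2.2 ∈ 𝓕 → el 𝓕 t ∈ O → t.2.2 < g + p + 1 := by
  by_cases hc : Set.Ici (g + p + 1) ∈ 𝓕
  -- left translation by `(0, 0, c)` raises the level of `(r, s, m)` to `max (c - r) m`
  · refine ⟨{y | BF0mul hcl (el 𝓕 (0, 0, g + p + 1)) y ≠ BF0mul hcl (el 𝓕 (0, 0, minLevel 𝓕)) y},
      isOpen_ne_fun (hleft _) (hleft _), ?_, ?_⟩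
    · show BF0mul hcl _ _ ≠ _
      rw [el_mul_el_of_le hcl hc hg (Nat.zero_le p), el_minLevel_mul hcl hg (Nat.zero_le p)]
      exact (el_ne_el hg (by simp)).symm
    · rintro ⟨r, s, m⟩ (hm : Set.Ici m ∈ 𝓕) hne
      show m < g + p + 1
      by_contra! hm_ge
      apply hne
      rw [el_mul_el_of_le hcl hc hm (Nat.zero_le r), el_minLevel_mul hcl hm (Nat.zero_le r),
        max_eq_right (by omega)]
  · refine ⟨Set.univ, isOpen_univ, trivial, fun t ht _ => ?_⟩
    by_contra! h
    exact hc (Ici_mem_of_le_of_le hcl hg ht (by omega) h)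

theorem isOpen_singleton_of_ne_none (hne : ∀ F ∈ 𝓕, F.Nonempty)
    (hind : ∀ F ∈ 𝓕, InductiveSet F) (hleft : ∀ a, Continuous (BF0mul hcl a))
    (hright : ∀ a, Continuous (BF0mul hcl · a)) {x : BF0 𝓕} (hx : x ≠ none) : IsOpen {x} := by
  obtain ⟨⟨p, q, g⟩, hg, rfl⟩ := exists_eq_el hne hind hx
  obtain ⟨O₁, hO₁, hx₁, h₁⟩ := exists_isOpen_fst_le hcl hleft (q := q) hg
  obtain ⟨O₂, hO₂, hx₂, h₂⟩ := exists_isOpen_snd_le hcl hright (p := p) hg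
  obtain ⟨O₃, hO₃, hx₃, h₃⟩ := exists_isOpen_level_lt hcl hleft (q := q) hg
  refine isOpen_singleton_of_finite_mem_nhds _
    ((hO₁.inter hO₂).inter hO₃ |>.mem_nhds ⟨⟨hx₁, hx₂⟩, hx₃⟩) ?_
  refine ((((Set.finite_Iic p).prod ((Set.finite_Iic q).prod
    (Set.finite_Iio (g + p + 1)))).image (el 𝓕)).insert none).subset ?_
  rintro y ⟨⟨hy₁, hy₂⟩, hy₃⟩
  by_cases hy : y = none
  · exact Or.inl hy
  obtain ⟨t, ht, rfl⟩ := exists_eq_el hne hind hy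
  exact Or.inr ⟨t, ⟨h₁ t ht hy₁, h₂ t ht hy₂, h₃ t ht hy₃⟩, rfl⟩

end Isolation

def coords (𝓕 : Set (Set ℕ)) (K : Set (BF0 𝓕)) : Set (ℕ × ℕ × ℕ) :=
  {t | Set.Ici t.2.2 ∈ 𝓕 ∧ el 𝓕 t ∈ K}

lemma coords_finite {E : Set (BF0 𝓕)} (hE : E.Finite) : (coords 𝓕 E).Finite :=
  Set.Finite.of_finite_image (hE.subset (Set.image_subset_iff.2 fun _ ht => ht.2))
    (el_injOn.mono fun _ ht => ht.1)

lemma coords_infinite (hne : ∀ F ∈ 𝓕, F.Nonempty) (hind : ∀ F ∈ 𝓕, InductiveSet F)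
    {K : Set (BF0 𝓕)} (hK : K.Infinite) : (coords 𝓕 K).Infinite := by
  have hsub : K \ {none} ⊆ el 𝓕 '' coords 𝓕 K := by
    rintro y ⟨hyK, hy⟩
    obtain ⟨t, ht, rfl⟩ := exists_eq_el hne hind hy
    exact ⟨t, ⟨ht, hyK⟩, rfl⟩
  exact fun hfin => hK.sdiff (Set.finite_singleton none) ((hfin.image _).subset hsub)

lemma preimage_coords_diff_subset {K : Set (BF0 𝓕)} {w : BF0 𝓕 → BF0 𝓕}
    {ρ σ : ℕ × ℕ × ℕ → ℕ × ℕ × ℕ} (hρ : ∀ t, (ρ t).2.2 = t.2.2) (hσ : ∀ t, (σ t).2.2 = t.2.2)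
    (hw : ∀ t, Set.Ici t.2.2 ∈ 𝓕 → w (el 𝓕 (ρ t)) = el 𝓕 (σ t)) :
    ρ ⁻¹' coords 𝓕 K \ σ ⁻¹' coords 𝓕 K ⊆ ρ ⁻¹' coords 𝓕 (K \ w ⁻¹' K) := by
  rintro t ⟨⟨hρt, hK⟩, hσt⟩
  rw [hρ] at hρt
  refine ⟨(hρ t).symm ▸ hρt, hK, fun hwK => hσt ⟨(hσ t).symm ▸ hρt, ?_⟩⟩
  rwa [← hw t hρt]

section Absorbing

variable (hcl : OmegaClosed 𝓕) [TopologicalSpace (BF0 𝓕)] {K : Set (BF0 𝓕)}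

lemma symmDiff_coords_preimage_succ_fst_finite
    (habsorb : ∀ w : BF0 𝓕 → BF0 𝓕, Continuous w → w none = none → (K \ w ⁻¹' K).Finite)
    (hleft : ∀ a, Continuous (BF0mul hcl a)) :
    (symmDiff (coords 𝓕 K) ((fun t => (t.1 + 1, t.2.1, t.2.2)) ⁻¹' coords 𝓕 K)).Finite := by
  have hinj : Function.Injective fun t : ℕ × ℕ × ℕ => (t.1 + 1, t.2.1, t.2.2) := by
    rintro ⟨a, b, m⟩ ⟨a', b', m'⟩ h
    simp_all
  refine Set.Finite.union ?_ ?_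
  · refine (coords_finite (habsorb _ (hleft (el 𝓕 (1, 0, minLevel 𝓕))) (mul_none hcl _))).subset
      (preimage_coords_diff_subset (ρ := id) (fun _ => rfl) (fun _ => rfl) ?_)
    rintro ⟨a, b, m⟩ hm
    rw [id, el_minLevel_mul hcl hm (Nat.zero_le a), add_comm, Nat.sub_zero]
  · refine ((coords_finite (habsorb _ (hleft (el 𝓕 (0, 1, minLevel 𝓕))) (mul_none hcl _))).preimage
      hinj.injOn).subset
      (preimage_coords_diff_subset (σ := id) (fun _ => rfl) (fun _ => rfl) ?_)
    rintro ⟨a, b, m⟩ hm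
    rw [id, el_minLevel_mul hcl hm (Nat.le_add_left 1 a), Nat.add_sub_cancel, zero_add]

lemma symmDiff_coords_preimage_succ_snd_finite
    (habsorb : ∀ w : BF0 𝓕 → BF0 𝓕, Continuous w → w none = none → (K \ w ⁻¹' K).Finite)
    (hright : ∀ a, Continuous (BF0mul hcl · a)) :
    (symmDiff (coords 𝓕 K) ((fun t => (t.1, t.2.1 + 1, t.2.2)) ⁻¹' coords 𝓕 K)).Finite := by
  have hinj : Function.Injective fun t : ℕ × ℕ × ℕ => (t.1, t.2.1 + 1, t.2.2) := by
    rintro ⟨a, b, m⟩ ⟨a', b', m'⟩ h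
    simp_all
  refine Set.Finite.union ?_ ?_
  · refine (coords_finite (habsorb _ (hright (el 𝓕 (0, 1, minLevel 𝓕))) (none_mul hcl _))).subset
      (preimage_coords_diff_subset (ρ := id) (fun _ => rfl) (fun _ => rfl) ?_)
    rintro ⟨a, b, m⟩ hm
    rw [id, el_mul_el_minLevel hcl hm (Nat.zero_le b), add_comm, Nat.sub_zero]
  · refine ((coords_finite (habsorb _ (hright (el 𝓕 (1, 0, minLevel 𝓕))) (none_mul hcl _))).preimage
      hinj.injOn).subset
      (preimage_coords_diff_subset (σ := id) (fun _ => rfl) (fun _ => rfl) ?_)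
    rintro ⟨a, b, m⟩ hm
    rw [id, el_mul_el_minLevel hcl hm (Nat.le_add_left 1 b), Nat.add_sub_cancel, zero_add]

end Absorbing

end BF0

open Topology in
lemma IsCompact.finite_diff_of_isOpen_singleton {X : Type*} [TopologicalSpace X] {K V : Set X}
    {z : X} (hK : IsCompact K) (hiso : ∀ x ≠ z, IsOpen {x}) (hV : V ∈ 𝓝 z) : (K \ V).Finite := by
  refine ((hK.diff isOpen_interior).finite ?_).subset (Set.sdiff_subset_sdiff_right interior_subset)
  refine isDiscrete_iff_forall_mem_exists_isOpen.2 fun x hx =>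
    ⟨{x}, hiso x ?_, Set.singleton_inter_of_mem hx⟩
  rintro rfl
  exact hx.2 (mem_interior_iff_mem_nhds.2 hV)

open BF0 in
/-- Lemma 3.3: if `S = B_ω^𝓕 ∪ {0}` carries a Hausdorff locally compact
shift-continuous topology with nonisolated zero, then for every neighbourhood `U`
of the zero there exists `F ∈ 𝓕` with `B_ω^{F} \ U` finite, where
`B_ω^{F} = {(i,j,F) : i,j ∈ ω}`. -/
theorem statement7 (𝓕 : Set (Set ℕ)) (hcl : OmegaClosed 𝓕)
    (hne : ∀ F ∈ 𝓕, F.Nonempty) (hind : ∀ F ∈ 𝓕, InductiveSet F)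
    (τ : TopologicalSpace (BF0 𝓕)) (hT2 : @T2Space _ τ)
    (hlc : @LocallyCompactSpace _ τ)
    (hsc : ∀ a : BF0 𝓕, @Continuous _ _ τ τ (fun x => BF0mul hcl a x) ∧
        @Continuous _ _ τ τ (fun x => BF0mul hcl x a))
    (hni : ¬ @IsOpen _ τ {(none : BF0 𝓕)})
    (U : Set (BF0 𝓕)) (hU : U ∈ @nhds _ τ none) :
    ∃ F : Set ℕ, ∃ hF : F ∈ 𝓕,
      ({x : BF0 𝓕 | ∃ i j : ℕ, x = some (i, j, ⟨F, hF⟩)} \ U).Finite := by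
  let := τ
  have hleft : ∀ a, Continuous (BF0mul hcl a) := fun a => (hsc a).1
  have hright : ∀ a, Continuous (BF0mul hcl · a) := fun a => (hsc a).2
  obtain ⟨K, hK, hKU, hKc⟩ := local_compact_nhds hU
  have habsorb : ∀ w : BF0 𝓕 → BF0 𝓕, Continuous w → w none = none → (K \ w ⁻¹' K).Finite :=
    fun w hw hw0 => hKc.finite_diff_of_isOpen_singleton
      (fun _ hx => isOpen_singleton_of_ne_none hcl hne hind hleft hright hx)
      (hw.continuousAt.preimage_mem_nhds (by rwa [hw0]))
  have hKinf : K.Infinite := fun hfin => hni (isOpen_singleton_of_finite_mem_nhds _ hK hfin)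
  obtain ⟨m, N, hmN⟩ := exists_forall_le_add_mem (coords_infinite hne hind hKinf)
    (symmDiff_coords_preimage_succ_fst_finite hcl habsorb hleft)
    (symmDiff_coords_preimage_succ_snd_finite hcl habsorb hright)
  have hm : Set.Ici m ∈ 𝓕 := (hmN N 0 le_self_add).1
  refine ⟨Set.Ici m, hm, (((Set.finite_Iio N).prod (Set.finite_Iio N)).image
    fun p => el 𝓕 (p.1, p.2, m)).subset ?_⟩
  rintro _ ⟨⟨i, j, rfl⟩, hnotU⟩
  have hel : el 𝓕 (i, j, m) = some (i, j, ⟨Set.Ici m, hm⟩) := el_of_mem hm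
  have hij : ¬ N ≤ i + j := fun h => hnotU (hel ▸ hKU (hmN i j h).2)
  exact ⟨(i, j), ⟨by simp; omega, by simp; omega⟩, hel⟩
end
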